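/- arXiv:2412.17134 — 4 statements merged into one kernel-verified Lean document; each statement's English description precedes it below -/
import Mathlib

section
/- Let (x, p) be an HZ equilibrium for utilities u. Then the allocation x is Pareto-optimal: there is no FPM y such that u_i · y_i ≥ u_i · x_i for all agents i with strict inequality for at least one agent. -/
open Finset

/-- A fractional perfect matching. -/
def IsFPM {A G : Type*} [Fintype A] [Fintype G] (x : A → G → ℝ) : Prop :=
  (∀ i j, 0 ≤ x i j) ∧ (∀ i, ∑ j, x i j = 1) ∧ (∀ j, ∑ i, x i j = 1)

/-- An HZ equilibrium. -/
def IsHZEquilibrium {A G : Type*} [Fintype A] [Fintype G]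
    (u : A → G → ℝ) (x : A → G → ℝ) (p : G → ℝ) : Prop :=
  IsFPM x ∧ (∀ j, 0 ≤ p j) ∧ (∀ i, ∑ j, p j * x i j ≤ 1) ∧
  ∀ i, ∀ y : G → ℝ, (∀ j, 0 ≤ y j) → (∑ j, y j) = 1 → (∑ j, p j * y j) ≤ 1 →
    (∑ j, u i j * y j ≤ ∑ j, u i j * x i j) ∧
    ((∑ j, u i j * y j) = (∑ j, u i j * x i j) → ∑ j, p j * x i j ≤ ∑ j, p j * y j)

/-- Pareto-optimality of an FPM: no FPM makes all agents at least as well off and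
some agent strictly better off. -/
def ParetoOptimal {A G : Type*} [Fintype A] [Fintype G]
    (u : A → G → ℝ) (x : A → G → ℝ) : Prop :=
  ¬ ∃ y : A → G → ℝ, IsFPM y ∧
    (∀ i, ∑ j, u i j * x i j ≤ ∑ j, u i j * y i j) ∧
    (∃ i, ∑ j, u i j * x i j < ∑ j, u i j * y i j)

/-- The allocation of an HZ equilibrium is Pareto-optimal. -/
theorem hz_equilibrium_paretoOptimal {A G : Type*} [Fintype A] [Fintype G]
    (u : A → G → ℝ) (x : A → G → ℝ) (p : G → ℝ)
    (h : IsHZEquilibrium u x p) : ParetoOptimal u x := by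
  rintro ⟨y, hy, hge, i0, hi0⟩
  obtain ⟨⟨hxnn, hxrow, hxcol⟩, hp, hbud, hopt⟩ := h
  have key : ∀ i ∈ Finset.univ, ∑ j, p j * x i j ≤ ∑ j, p j * y i j := by
    intro i _
    by_cases hc : ∑ j, p j * y i j ≤ 1
    · have h2 := hopt i (y i) (fun j => hy.1 i j) (hy.2.1 i) hc
      exact h2.2 (le_antisymm h2.1 (hge i))
    · exact (hbud i).trans (le_of_not_ge hc)
  have key0 : ∑ j, p j * x i0 j < ∑ j, p j * y i0 j := by
    by_cases hc : ∑ j, p j * y i0 j ≤ 1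
    · exact absurd (hopt i0 (y i0) (fun j => hy.1 i0 j) (hy.2.1 i0) hc).1
        (not_le.2 hi0)
    · exact lt_of_le_of_lt (hbud i0) (not_le.1 hc)
  have hlt : ∑ i, ∑ j, p j * x i j < ∑ i, ∑ j, p j * y i j :=
    Finset.sum_lt_sum key ⟨i0, Finset.mem_univ i0, key0⟩
  have heq : ∑ i, ∑ j, p j * x i j = ∑ i, ∑ j, p j * y i j := by
    rw [Finset.sum_comm, Finset.sum_comm (f := fun i j => p j * y i j)]
    simp only [← Finset.mul_sum, hxcol, hy.2.2]
  exact absurd heq (ne_of_lt hlt)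
end

section
/- Let (x, p) be an HZ equilibrium. Then there exist prices p' such that (x, p') is an HZ equilibrium and p'_j = 0 for at least one item j ∈ G. -/
open Finset

/-!
Let `m` be the smallest price. If `m < 1`, the prices `(p - m) / (1 - m)` vanish at a cheapest
item, and on the simplex they are an increasing affine function of `p` fixing the budget `1`,
so budget sets and the cheapness comparison are unchanged. If `m ≥ 1`, counting shows every
price is exactly `1` (the total price of the matched bundles is at most `|A| = |G|`); then
every bundle is affordable, and all prices may be set to `0`.
-/

section HZ

variable {A G : Type*} [Fintype A] [Fintype G] {u x : A → G → ℝ} {p : G → ℝ}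

theorem IsFPM.card_eq (hx : IsFPM x) : Fintype.card A = Fintype.card G := by
  obtain ⟨-, hrow, hcol⟩ := hx
  have : (Fintype.card A : ℝ) = Fintype.card G := by
    calc (Fintype.card A : ℝ) = ∑ i, ∑ j, x i j := by simp [hrow]
      _ = ∑ j, ∑ i, x i j := Finset.sum_comm
      _ = Fintype.card G := by simp [hcol]
  exact_mod_cast this

theorem IsHZEquilibrium.sum_price_le_card (h : IsHZEquilibrium u x p) :
    ∑ j, p j ≤ Fintype.card G := by
  obtain ⟨hx, -, hbudget, -⟩ := h
  calc ∑ j, p j = ∑ j, ∑ i, p j * x i j := by simp [← Finset.mul_sum, hx.2.2]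
    _ = ∑ i, ∑ j, p j * x i j := Finset.sum_comm
    _ ≤ ∑ _i : A, (1 : ℝ) := Finset.sum_le_sum fun i _ => hbudget i
    _ = Fintype.card G := by simp [hx.card_eq]

theorem IsHZEquilibrium.price_eq_one_of_one_le (h : IsHZEquilibrium u x p)
    (hp : ∀ j, 1 ≤ p j) (j : G) : p j = 1 := by
  have hsum : ∑ _j : G, (1 : ℝ) = ∑ j, p j :=
    le_antisymm (Finset.sum_le_sum fun j _ => hp j) (by simpa using h.sum_price_le_card)
  exact ((Finset.sum_eq_sum_iff_of_le fun j _ => hp j).mp hsum j (mem_univ j)).symm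

theorem IsHZEquilibrium.zero_prices_of_le_one (h : IsHZEquilibrium u x p)
    (hp : ∀ j, p j ≤ 1) : IsHZEquilibrium u x 0 := by
  obtain ⟨hx, hp0, -, hopt⟩ := h
  refine ⟨hx, fun _ => le_rfl, fun _ => by simp, fun i y hy0 hy1 _ => ⟨?_, fun _ => by simp⟩⟩
  have hy_affordable : ∑ j, p j * y j ≤ 1 :=
    calc ∑ j, p j * y j ≤ ∑ j, y j :=
          Finset.sum_le_sum fun j _ => mul_le_of_le_one_left (hy0 j) (hp j)
      _ = 1 := hy1
  exact (hopt i y hy0 hy1 hy_affordable).1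

theorem sum_sub_div_mul_of_sum_eq_one {m : ℝ} {y : G → ℝ} (hy : ∑ j, y j = 1) :
    ∑ j, (p j - m) / (1 - m) * y j = (∑ j, p j * y j - m) / (1 - m) := by
  simp only [div_mul_eq_mul_div, sub_mul]
  rw [← Finset.sum_div, Finset.sum_sub_distrib, ← Finset.mul_sum, hy, mul_one]

theorem IsHZEquilibrium.sub_div_prices (h : IsHZEquilibrium u x p) {m : ℝ} (hm : m < 1)
    (hmp : ∀ j, m ≤ p j) : IsHZEquilibrium u x fun j => (p j - m) / (1 - m) := by
  obtain ⟨hx, -, hbudget, hopt⟩ := h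
  have hpos : 0 < 1 - m := sub_pos.mpr hm
  refine ⟨hx, fun j => div_nonneg (sub_nonneg.mpr (hmp j)) hpos.le, fun i => ?_,
    fun i y hy0 hy1 hyq => ?_⟩
  · rw [sum_sub_div_mul_of_sum_eq_one (hx.2.1 i), div_le_one hpos]
    linarith [hbudget i]
  · rw [sum_sub_div_mul_of_sum_eq_one hy1, div_le_one hpos] at hyq
    obtain ⟨hbest, hcheapest⟩ := hopt i y hy0 hy1 (by linarith)
    refine ⟨hbest, fun heq => ?_⟩
    rw [sum_sub_div_mul_of_sum_eq_one hy1, sum_sub_div_mul_of_sum_eq_one (hx.2.1 i)]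
    exact div_le_div_of_nonneg_right (by linarith [hcheapest heq]) hpos.le

end HZ

/-- Given an HZ equilibrium (x, p), there exist prices p' making
(x, p') an HZ equilibrium with at least one item priced at zero. -/
theorem hz_equilibrium_exists_zero_price {A G : Type*} [Fintype A] [Fintype G] [Nonempty G]
    (u : A → G → ℝ) (x : A → G → ℝ) (p : G → ℝ)
    (h : IsHZEquilibrium u x p) :
    ∃ p' : G → ℝ, IsHZEquilibrium u x p' ∧ ∃ j : G, p' j = 0 := by
  obtain ⟨j₀, -, hmin⟩ := Finset.exists_min_image univ p univ_nonempty
  by_cases hm : p j₀ < 1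
  · exact ⟨_, h.sub_div_prices hm fun j => hmin j (mem_univ j), j₀, by simp⟩
  · have hp : ∀ j, 1 ≤ p j := fun j => (not_lt.mp hm).trans (hmin j (mem_univ j))
    exact ⟨0, h.zero_prices_of_le_one fun j => (h.price_eq_one_of_one_le hp j).le, j₀, rfl⟩
end

section
/- Let (x, p) be an HZ earnings equilibrium for utilities u. Then the allocation x is Pareto-optimal: there is no FPM y such that u_i · y_i ≥ u_i · x_i for all agents i with strict inequality for at least one agent. -/
open Finset

/-- An HZ earnings equilibrium. -/
def IsHZEarningsEquilibrium {A G : Type*} [Fintype A] [Fintype G]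
    (u : A → G → ℝ) (x : A → G → ℝ) (p : G → ℝ) : Prop :=
  IsFPM x ∧ (∀ j, 0 ≤ p j) ∧ (∀ i, 1 ≤ ∑ j, p j * x i j) ∧
  ∀ i, ∀ y : G → ℝ, (∀ j, 0 ≤ y j) → (∑ j, y j) = 1 → 1 ≤ (∑ j, p j * y j) →
    (∑ j, u i j * y j ≤ ∑ j, u i j * x i j) ∧
    ((∑ j, u i j * y j) = (∑ j, u i j * x i j) → ∑ j, p j * y j ≤ ∑ j, p j * x i j)

/-- The allocation of an HZ earnings equilibrium is Pareto-optimal. -/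
theorem hz_earnings_equilibrium_paretoOptimal {A G : Type*} [Fintype A] [Fintype G]
    (u : A → G → ℝ) (x : A → G → ℝ) (p : G → ℝ)
    (h : IsHZEarningsEquilibrium u x p) : ParetoOptimal u x := by
  rintro ⟨y, ⟨hy0, hyr, hyc⟩, hge, i₀, hlt⟩
  obtain ⟨⟨hx0, hxr, hxc⟩, hp, hbud, hopt⟩ := h
  have key : ∀ i, ∑ j, p j * y i j ≤ ∑ j, p j * x i j := by
    intro i
    by_cases hc : 1 ≤ ∑ j, p j * y i j
    · obtain ⟨h1, h2⟩ := hopt i (y i) (hy0 i) (hyr i) hc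
      exact h2 (le_antisymm h1 (hge i))
    · exact le_trans (le_of_not_ge hc) (hbud i)
  have keystrict : ∑ j, p j * y i₀ j < ∑ j, p j * x i₀ j := by
    by_cases hc : 1 ≤ ∑ j, p j * y i₀ j
    · exact absurd ((hopt i₀ (y i₀) (hy0 i₀) (hyr i₀) hc).1) (not_le.2 hlt)
    · exact lt_of_lt_of_le (not_le.1 hc) (hbud i₀)
  have hsum : ∑ i, ∑ j, p j * y i j < ∑ i, ∑ j, p j * x i j :=
    Finset.sum_lt_sum (fun i _ => key i) ⟨i₀, Finset.mem_univ _, keystrict⟩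
  have e1 : ∑ i, ∑ j, p j * y i j = ∑ j, p j := by
    rw [Finset.sum_comm]; simp [← Finset.mul_sum, hyc]
  have e2 : ∑ i, ∑ j, p j * x i j = ∑ j, p j := by
    rw [Finset.sum_comm]; simp [← Finset.mul_sum, hxc]
  rw [e1, e2] at hsum; exact lt_irrefl _ hsum
end

section
/- Suppose there are exactly two agents with positive demands d_1 and d_2 with d_1 + d_2 = |G|. Let x be an envy-free fractional allocation and let y be a fractional allocation that is Pareto-better than x (i.e., u_i · y_i ≥ u_i · x_i for i = 1, 2 with strict inequality for at least one agent). Then y is also envy-free. -/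
open Finset

/-- A fractional allocation for agents with demands: nonnegative entries, agent i
receives exactly d i units, and each item is fully allocated. -/
def IsAllocation {A G : Type*} [Fintype A] [Fintype G]
    (d : A → ℝ) (x : A → G → ℝ) : Prop :=
  (∀ i j, 0 ≤ x i j) ∧ (∀ i, ∑ j, x i j = d i) ∧ (∀ j, ∑ i, x i j = 1)

/-- Envy-freeness with demands: envy is measured on a utility-per-demand basis. -/
def EnvyFreeDemand {A G : Type*} [Fintype A] [Fintype G]
    (d : A → ℝ) (u : A → G → ℝ) (x : A → G → ℝ) : Prop :=
  ∀ i i' : A, (∑ j, u i j * x i' j) / d i' ≤ (∑ j, u i j * x i j) / d i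

lemma sum_other {G : Type*} [Fintype G] (u : G → ℝ) (x : Fin 2 → G → ℝ)
    (h : ∀ j, ∑ i, x i j = 1) :
    (∑ j, u j * x 1 j) = (∑ j, u j) - ∑ j, u j * x 0 j := by
  rw [← Finset.sum_sub_distrib]
  apply Finset.sum_congr rfl
  intro j _
  have h2 : x 1 j = 1 - x 0 j := by
    have := h j
    rw [Fin.sum_univ_two] at this
    linarith
  rw [h2]; ring

/-- With two agents, any allocation Pareto-better than an envy-free
allocation is itself envy-free. -/
theorem pareto_better_of_envyFree_two_agents {G : Type*} [Fintype G]
    (d : Fin 2 → ℝ) (hd : ∀ i, 0 < d i) (hdsum : d 0 + d 1 = (Fintype.card G : ℝ))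
    (u : Fin 2 → G → ℝ) (x y : Fin 2 → G → ℝ)
    (hx : IsAllocation d x) (hxef : EnvyFreeDemand d u x)
    (hy : IsAllocation d y)
    (hyweak : ∀ i, ∑ j, u i j * x i j ≤ ∑ j, u i j * y i j)
    (hystrict : ∃ i, ∑ j, u i j * x i j < ∑ j, u i j * y i j) :
    EnvyFreeDemand d u y := by
  intro i i'
  have hd0 := hd 0
  have hd1 := hd 1
  fin_cases i <;> fin_cases i' <;> simp only [Fin.zero_eta, Fin.mk_one] <;> try exact le_refl _
  · -- i = 0, i' = 1
    have hxo := sum_other (u 0) x hx.2.2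
    have hyo := sum_other (u 0) y hy.2.2
    have hef := hxef 0 1
    rw [hxo] at hef
    rw [hyo]
    have hw := hyweak 0
    rw [div_le_div_iff₀ hd1 hd0] at hef ⊢
    nlinarith [hef, hw]
  · -- i = 1, i' = 0
    have hxo := sum_other (u 1) x hx.2.2
    have hyo := sum_other (u 1) y hy.2.2
    have hef := hxef 1 0
    have hw := hyweak 1
    rw [div_le_div_iff₀ hd0 hd1] at hef ⊢
    nlinarith [hef, hw, hxo, hyo]
end
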